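/- In the Brauer monoid B_n with n even, the map f sending each Brauer element α of rank 2 with transversals {i, j'} and {k, l'} to the rank-0 element α̂ obtained by replacing these transversals by the non-transversals {i, k} and {j', l'} (and fixing rank-0 elements) is a retraction from the ideal I₂ = {α ∈ B_n : rank(α) ≤ 2} onto the minimal ideal I₀ = {α : rank(α) = 0}; that is, f is a homomorphism fixing I₀ pointwise. -/
import Mathlib


namespace PM

/-- The points `{1,…,n} ∪ {1',…,n'}`: `Sum.inl` is the top row, `Sum.inr` the bottom row. -/
abbrev Pt (n : ℕ) := Fin n ⊕ Fin n

/-- An element of the partition monoid `P_n`: a set partition of `Pt n`,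
encoded as an equivalence relation (setoid). -/
abbrev Ptn (n : ℕ) := Setoid (Pt n)

/-- Embedding of the first factor (as top and middle layer) into the three-layer set. -/
def iota1 {n : ℕ} : Pt n → (Fin n ⊕ Pt n)
  | Sum.inl i => Sum.inl i
  | Sum.inr i => Sum.inr (Sum.inl i)

/-- Embedding of the second factor (as middle and bottom layer). -/
def iota2 {n : ℕ} : Pt n → (Fin n ⊕ Pt n)
  | Sum.inl i => Sum.inr (Sum.inl i)
  | Sum.inr i => Sum.inr (Sum.inr i)

/-- Embedding of the product (top and bottom layer). -/
def iota3 {n : ℕ} : Pt n → (Fin n ⊕ Pt n)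
  | Sum.inl i => Sum.inl i
  | Sum.inr i => Sum.inr (Sum.inr i)

/-- The edges of the product graph Π(α,β) on the three-layer vertex set. -/
def mulBase {n : ℕ} (α β : Ptn n) (a b : Fin n ⊕ Pt n) : Prop :=
  (∃ x y : Pt n, α.r x y ∧ iota1 x = a ∧ iota1 y = b) ∨
    (∃ x y : Pt n, β.r x y ∧ iota2 x = a ∧ iota2 y = b)

/-- The product in the partition monoid: `x, y` lie in the same block of `α * β`
iff they are connected by a path in the product graph. -/
def pmul {n : ℕ} (α β : Ptn n) : Ptn n :=
  Setoid.comap iota3 (Relation.EqvGen.setoid (mulBase α β))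

/-- The identity partition, with blocks `{i, i'}`. -/
def pone (n : ℕ) : Ptn n := Setoid.ker (Sum.elim id id)

/-- The domain: top points lying in a transversal block. -/
def dom {n : ℕ} (α : Ptn n) : Set (Fin n) := {i | ∃ j, α.r (Sum.inl i) (Sum.inr j)}

/-- The codomain: bottom points lying in a transversal block. -/
def codom {n : ℕ} (α : Ptn n) : Set (Fin n) := {j | ∃ i, α.r (Sum.inl i) (Sum.inr j)}

/-- The kernel: the induced equivalence on the top row. -/
def kerr {n : ℕ} (α : Ptn n) (i j : Fin n) : Prop := α.r (Sum.inl i) (Sum.inl j)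

/-- The cokernel: the induced equivalence on the bottom row. -/
def cokerr {n : ℕ} (α : Ptn n) (i j : Fin n) : Prop := α.r (Sum.inr i) (Sum.inr j)

/-- The rank: the number of transversal blocks, counted via the minimal
top point of each transversal block. -/
noncomputable def rank {n : ℕ} (α : Ptn n) : ℕ :=
  Set.ncard {i : Fin n | i ∈ dom α ∧ ∀ j ∈ dom α, kerr α i j → i ≤ j}

/-- Green's R relation on `P_n` (a monoid, so no extra identity is needed). -/
def PGreenR {n : ℕ} (α β : Ptn n) : Prop :=
  (∃ γ, pmul α γ = β) ∧ ∃ γ, pmul β γ = α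

/-- Green's L relation on `P_n`. -/
def PGreenL {n : ℕ} (α β : Ptn n) : Prop :=
  (∃ γ, pmul γ α = β) ∧ ∃ γ, pmul γ β = α

/-- Green's J relation on `P_n`. -/
def PGreenJ {n : ℕ} (α β : Ptn n) : Prop :=
  (∃ γ δ, pmul (pmul γ α) δ = β) ∧ ∃ γ δ, pmul (pmul γ β) δ = α

/-- The involution `α ↦ α*`, reflecting in the horizontal axis. -/
def star {n : ℕ} (α : Ptn n) : Ptn n := Setoid.comap Sum.swap α

/-- `α̂` : the unique partition of rank 0 with the same kernel and cokernel as `α`: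
it relates two points iff they lie on the same row and are `α`-related. -/
def hat {n : ℕ} (α : Ptn n) : Ptn n where
  r x y := α.r x y ∧ x.isLeft = y.isLeft
  iseqv :=
    ⟨fun x => ⟨α.iseqv.refl x, rfl⟩,
     fun h => ⟨α.iseqv.symm h.1, h.2.symm⟩,
     fun h h' => ⟨α.iseqv.trans h.1 h'.1, h.2.trans h'.2⟩⟩

/-- `α` is a Brauer element: every block has size exactly 2. -/
def IsBrauer {n : ℕ} (α : Ptn n) : Prop :=
  ∀ x : Pt n, ∃ y, y ≠ x ∧ α.r x y ∧ ∀ z, α.r x z → z = x ∨ z = y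

/-- Position of a point in the boundary order `1, …, n, n', …, 1'`. -/
def ordPos {n : ℕ} : Pt n → ℕ
  | Sum.inl i => i.val
  | Sum.inr j => 2 * n - 1 - j.val

/-- `α` is planar: no two of its blocks cross with respect to the boundary order. -/
def IsPlanar {n : ℕ} (α : Ptn n) : Prop :=
  ∀ w x y z : Pt n, ordPos w < ordPos x → ordPos x < ordPos y → ordPos y < ordPos z →
    α.r w y → α.r x z → α.r w x

end PM

namespace PM

/-- `x` is a top point lying in a transversal block of `α`. -/
def domPt {n : ℕ} (α : Ptn n) (x : Pt n) : Prop :=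
  ∃ i j : Fin n, x = Sum.inl i ∧ α.r x (Sum.inr j)

/-- `x` is a bottom point lying in a transversal block of `α`. -/
def codPt {n : ℕ} (α : Ptn n) (x : Pt n) : Prop :=
  ∃ i j : Fin n, x = Sum.inr j ∧ α.r (Sum.inl i) x

/-- Generating relation for `α̂` in the Brauer monoid: keep the same-row parts of the
blocks of `α`, join all the transversal top points into one block and all the transversal
bottom points into one block (for rank-2 Brauer elements with transversals `{i,j'}` and
`{k,l'}` this replaces them by `{i,k}` and `{j',l'}`). -/
def bhatBase {n : ℕ} (α : Ptn n) (x y : Pt n) : Prop :=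
  (α.r x y ∧ x.isLeft = y.isLeft) ∨ (domPt α x ∧ domPt α y) ∨ (codPt α x ∧ codPt α y)

/-- The retraction `α ↦ α̂` of the ideal `I₂` of the Brauer monoid (for `n` even). -/
def bhat {n : ℕ} (α : Ptn n) : Ptn n := Relation.EqvGen.setoid (bhatBase α)

end PM
namespace PM

variable {n : ℕ} {α β : Ptn n}

lemma eqvGen_closed {V : Type*} {r : V → V → Prop} (hsym : ∀ a b, r a b → r b a)
    {S : Set V} (hS : ∀ a ∈ S, ∀ b, r a b → b ∈ S) {x y : V}
    (h : Relation.EqvGen r x y) : x ∈ S ↔ y ∈ S := by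
  induction h with
  | rel a b hab => exact ⟨fun ha => hS a ha b hab, fun hb => hS b hb a (hsym a b hab)⟩
  | refl => exact Iff.rfl
  | symm _ _ _ ih => exact ih.symm
  | trans _ _ _ _ _ ih1 ih2 => exact ih1.trans ih2

/-- The partner function of a Brauer element. -/
noncomputable def bp (hα : IsBrauer α) (x : Pt n) : Pt n := (hα x).choose

lemma bp_ne (hα : IsBrauer α) (x : Pt n) : bp hα x ≠ x := (hα x).choose_spec.1

lemma bp_rel (hα : IsBrauer α) (x : Pt n) : α.r x (bp hα x) := (hα x).choose_spec.2.1

lemma bp_spec (hα : IsBrauer α) {x z : Pt n} (h : α.r x z) : z = x ∨ z = bp hα x :=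
  (hα x).choose_spec.2.2 z h

lemma rel_iff_bp (hα : IsBrauer α) {x z : Pt n} : α.r x z ↔ z = x ∨ z = bp hα x := by
  refine ⟨bp_spec hα, ?_⟩
  rintro (rfl | rfl)
  · exact α.iseqv.refl _
  · exact bp_rel hα x

lemma bp_eq_iff (hα : IsBrauer α) {x z : Pt n} (hne : z ≠ x) : bp hα x = z ↔ α.r x z := by
  constructor
  · rintro rfl; exact bp_rel hα x
  · intro h; rcases bp_spec hα h with rfl | rfl
    · exact absurd rfl hne
    · rfl

lemma bp_invol (hα : IsBrauer α) (x : Pt n) : bp hα (bp hα x) = x := by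
  have h : α.r (bp hα x) x := α.iseqv.symm (bp_rel hα x)
  rcases bp_spec hα h with h' | h'
  · exact absurd h'.symm (bp_ne hα x)
  · exact h'.symm

lemma bp_inj (hα : IsBrauer α) {x y : Pt n} (h : bp hα x = bp hα y) : x = y := by
  have := congrArg (bp hα) h
  rwa [bp_invol, bp_invol] at this

lemma mem_dom_iff_bp (hα : IsBrauer α) {i : Fin n} :
    i ∈ dom α ↔ ∃ k, bp hα (Sum.inl i) = Sum.inr k := by
  constructor
  · rintro ⟨k, hk⟩
    exact ⟨k, (bp_eq_iff hα (by simp)).2 hk⟩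
  · rintro ⟨k, hk⟩
    exact ⟨k, hk ▸ bp_rel hα (Sum.inl i)⟩

lemma mem_codom_iff_bp (hα : IsBrauer α) {j : Fin n} :
    j ∈ codom α ↔ ∃ k, bp hα (Sum.inr j) = Sum.inl k := by
  constructor
  · rintro ⟨k, hk⟩
    exact ⟨k, (bp_eq_iff hα (by simp)).2 (α.iseqv.symm hk)⟩
  · rintro ⟨k, hk⟩
    exact ⟨k, α.iseqv.symm (hk ▸ bp_rel hα (Sum.inr j))⟩

lemma notMem_dom_iff_bp (hα : IsBrauer α) {i : Fin n} :
    i ∉ dom α ↔ ∃ k, bp hα (Sum.inl i) = Sum.inl k := by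
  rw [mem_dom_iff_bp hα]
  rcases h : bp hα (Sum.inl i) with k | k <;> simp [h]

lemma notMem_codom_iff_bp (hα : IsBrauer α) {j : Fin n} :
    j ∉ codom α ↔ ∃ k, bp hα (Sum.inr j) = Sum.inr k := by
  rw [mem_codom_iff_bp hα]
  rcases h : bp hα (Sum.inr j) with k | k <;> simp [h]

/-- For a Brauer element, the set of minimal representatives is all of `dom`. -/
lemma rank_eq_ncard_dom (hα : IsBrauer α) : rank α = (dom α).ncard := by
  unfold rank
  congr 1
  ext i
  simp only [Set.mem_setOf_eq]
  refine ⟨fun h => h.1, fun h => ⟨h, fun j hj hk => ?_⟩⟩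
  rcases mem_dom_iff_bp hα |>.1 h with ⟨k, hk'⟩
  rcases bp_spec hα hk with h' | h'
  · cases h'; exact le_refl _
  · rw [hk'] at h'; cases h'

lemma rank_eq_zero_iff (hα : IsBrauer α) : rank α = 0 ↔ dom α = ∅ := by
  rw [rank_eq_ncard_dom hα]
  have hfin : (dom α).Finite := Set.toFinite _
  rw [Set.ncard_eq_zero hfin]

lemma codom_eq_empty_iff : codom α = ∅ ↔ dom α = ∅ := by
  constructor <;> intro h <;> ext j <;> simp only [Set.mem_empty_iff_false, iff_false]
  · rintro ⟨k, hk⟩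
    exact (Set.eq_empty_iff_forall_notMem.1 h k) ⟨j, hk⟩
  · rintro ⟨k, hk⟩
    exact (Set.eq_empty_iff_forall_notMem.1 h k) ⟨j, hk⟩
lemma even_card_invol {γ : Type*} [DecidableEq γ] (s : Finset γ) (f : γ → γ)
    (hf1 : ∀ a ∈ s, f a ∈ s) (hf2 : ∀ a ∈ s, f (f a) = a) (hf3 : ∀ a ∈ s, f a ≠ a) :
    Even s.card := by
  induction s using Finset.strongInduction with
  | _ s ih =>
    rcases s.eq_empty_or_nonempty with rfl | ⟨a, ha⟩
    · simp
    · have hfa : f a ∈ s := hf1 a ha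
      have hne : f a ≠ a := hf3 a ha
      set s' := s \ {a, f a} with hs'
      have hsub : {a, f a} ⊆ s := by
        intro x hx; simp only [Finset.mem_insert, Finset.mem_singleton] at hx
        rcases hx with rfl | rfl <;> assumption
      have hss : s' ⊂ s := by
        refine Finset.ssubset_iff_of_subset (Finset.sdiff_subset) |>.2 ⟨a, ha, ?_⟩
        simp [hs']
      have h1 : ∀ b ∈ s', f b ∈ s' := by
        intro b hb
        simp only [hs', Finset.mem_sdiff, Finset.mem_insert, Finset.mem_singleton] at hb ⊢
        obtain ⟨hbs, hb2⟩ := hb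
        push_neg at hb2
        refine ⟨hf1 b hbs, ?_⟩
        rintro (h | h)
        · exact hb2.2 (by rw [← h, hf2 b hbs])
        · exact hb2.1 (by
            have := congrArg f h
            rwa [hf2 b hbs, hf2 a ha] at this)
      have h2 : ∀ b ∈ s', f (f b) = b := fun b hb => hf2 b (Finset.mem_sdiff.1 hb).1
      have h3 : ∀ b ∈ s', f b ≠ b := fun b hb => hf3 b (Finset.mem_sdiff.1 hb).1
      have heven := ih s' hss h1 h2 h3
      have hc2 : ({a, f a} : Finset γ).card = 2 := by
        rw [Finset.card_insert_of_notMem (by simpa using hne.symm), Finset.card_singleton]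
      have hcd := Finset.card_sdiff_add_card_eq_card hsub
      rw [hc2] at hcd
      rw [← hs'] at hcd
      obtain ⟨c, hc⟩ := heven
      exact ⟨c + 1, by omega⟩
open Classical in
lemma ncard_codom_eq_ncard_dom (hα : IsBrauer α) : (codom α).ncard = (dom α).ncard := by
  classical
  set π : Fin n → Fin n := fun i => match h : bp hα (Sum.inl i) with
    | Sum.inr k => k
    | Sum.inl _ => i with hπ
  have hπd : ∀ i ∈ dom α, bp hα (Sum.inl i) = Sum.inr (π i) := by
    intro i hi
    rcases (mem_dom_iff_bp hα).1 hi with ⟨k, hk⟩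
    simp only [hπ]
    split
    · next k' h => exact h
    · next v h => rw [h] at hk; cases hk
  have himg : codom α = π '' dom α := by
    ext j
    constructor
    · rintro ⟨i, hij⟩
      have hd : i ∈ dom α := ⟨j, hij⟩
      have hb : bp hα (Sum.inl i) = Sum.inr j := (bp_eq_iff hα (by simp)).2 hij
      refine ⟨i, hd, ?_⟩
      have := hπd i hd; rw [hb] at this
      exact (Sum.inr_injective this).symm
    · rintro ⟨i, hi, rfl⟩
      exact ⟨i, (hπd i hi) ▸ bp_rel hα (Sum.inl i)⟩
  rw [himg]
  apply Set.ncard_image_of_injOn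
  intro i hi i' hi' hii
  have h1 := hπd i hi
  have h2 := hπd i' hi'
  rw [hii, ← h2] at h1
  have := bp_inj hα h1
  simpa using this

lemma even_ncard_dom (hα : IsBrauer α) (hn : Even n) : Even ((dom α).ncard) := by
  classical
  have hcompl : (dom α).ncard + (dom α)ᶜ.ncard = n := by
    rw [Set.ncard_add_ncard_compl]
    simp
  have hev : Even ((dom α)ᶜ.ncard) := by
    rw [Set.ncard_eq_toFinset_card']
    set f : Fin n → Fin n := fun i => match bp hα (Sum.inl i) with
      | Sum.inl i' => i'
      | Sum.inr _ => i with hf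
    have hfd : ∀ i ∉ dom α, Sum.inl (f i) = bp hα (Sum.inl i) := by
      intro i hi
      rcases (notMem_dom_iff_bp hα).1 hi with ⟨k, hk⟩
      simp only [hf]
      rw [hk]
    apply even_card_invol _ f
    · intro a ha
      rw [Set.mem_toFinset] at ha ⊢
      intro hmem
      rcases (mem_dom_iff_bp hα).1 hmem with ⟨k, hk⟩
      have h1 := hfd a ha
      have h2 : bp hα (Sum.inl (f a)) = Sum.inl a := by rw [h1, bp_invol]
      rw [hk] at h2; cases h2
    · intro a ha
      rw [Set.mem_toFinset] at ha
      have h1 := hfd a ha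
      have h2 : bp hα (Sum.inl (f a)) = Sum.inl a := by rw [h1, bp_invol]
      have h3 : f a ∉ dom α := by
        intro hmem
        rcases (mem_dom_iff_bp hα).1 hmem with ⟨k, hk⟩
        rw [hk] at h2; cases h2
      have h4 := hfd (f a) h3
      rw [h2] at h4
      exact Sum.inl_injective h4
    · intro a ha
      rw [Set.mem_toFinset] at ha
      intro hfa
      have h1 := hfd a ha
      rw [hfa] at h1
      exact bp_ne hα (Sum.inl a) h1.symm
  obtain ⟨c, hc⟩ := hev
  obtain ⟨d, hd⟩ := hn
  exact ⟨d - c, by omega⟩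
lemma domPt_inl {i : Fin n} : domPt α (Sum.inl i) ↔ i ∈ dom α := by
  constructor
  · rintro ⟨i', j, hx, hr⟩
    cases hx; exact ⟨j, hr⟩
  · rintro ⟨j, hj⟩; exact ⟨i, j, rfl, hj⟩

lemma not_domPt_inr {j : Fin n} : ¬ domPt α (Sum.inr j) := by
  rintro ⟨i', j', hx, _⟩; cases hx

lemma codPt_inr {j : Fin n} : codPt α (Sum.inr j) ↔ j ∈ codom α := by
  constructor
  · rintro ⟨i, j', hx, hr⟩
    cases hx; exact ⟨i, hr⟩
  · rintro ⟨i, hi⟩; exact ⟨i, j, rfl, hi⟩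

lemma not_codPt_inl {i : Fin n} : ¬ codPt α (Sum.inl i) := by
  rintro ⟨i', j', hx, _⟩; cases hx

lemma row_rel_domPt (hα : IsBrauer α) {x z : Pt n} (hrel : α.r x z)
    (hrow : x.isLeft = z.isLeft) (hd : domPt α x) : z = x := by
  obtain ⟨i, k, rfl, hr⟩ := hd
  have hb : bp hα (Sum.inl i) = Sum.inr k := (bp_eq_iff hα (by simp)).2 hr
  rcases bp_spec hα hrel with h | h
  · exact h
  · rw [hb] at h; rw [h] at hrow; simp at hrow

lemma row_rel_codPt (hα : IsBrauer α) {x z : Pt n} (hrel : α.r x z)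
    (hrow : x.isLeft = z.isLeft) (hd : codPt α x) : z = x := by
  obtain ⟨i, k, rfl, hr⟩ := hd
  have hb : bp hα (Sum.inr k) = Sum.inl i := (bp_eq_iff hα (by simp)).2 (α.iseqv.symm hr)
  rcases bp_spec hα hrel with h | h
  · exact h
  · rw [hb] at h; rw [h] at hrow; simp at hrow

lemma bhatBase_equiv (hα : IsBrauer α) : Equivalence (bhatBase α) := by
  constructor
  · intro x; exact Or.inl ⟨α.iseqv.refl x, rfl⟩
  · rintro x y (⟨h1, h2⟩ | ⟨h1, h2⟩ | ⟨h1, h2⟩)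
    · exact Or.inl ⟨α.iseqv.symm h1, h2.symm⟩
    · exact Or.inr (Or.inl ⟨h2, h1⟩)
    · exact Or.inr (Or.inr ⟨h2, h1⟩)
  · rintro x y z (⟨h1, h2⟩ | ⟨h1, h2⟩ | ⟨h1, h2⟩) (⟨g1, g2⟩ | ⟨g1, g2⟩ | ⟨g1, g2⟩)
    · exact Or.inl ⟨α.iseqv.trans h1 g1, h2.trans g2⟩
    · have hxy : x = y := row_rel_domPt hα (α.iseqv.symm h1) h2.symm g1
      exact Or.inr (Or.inl ⟨hxy ▸ g1, g2⟩)
    · have hxy : x = y := row_rel_codPt hα (α.iseqv.symm h1) h2.symm g1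
      exact Or.inr (Or.inr ⟨hxy ▸ g1, g2⟩)
    · have hzy : z = y := row_rel_domPt hα g1 g2 h2
      exact Or.inr (Or.inl ⟨h1, hzy ▸ h2⟩)
    · exact Or.inr (Or.inl ⟨h1, g2⟩)
    · obtain ⟨_, _, hy, _⟩ := h2
      obtain ⟨_, _, hy', _⟩ := g1
      rw [hy] at hy'; cases hy'
    · have hzy : z = y := row_rel_codPt hα g1 g2 h2
      exact Or.inr (Or.inr ⟨h1, hzy ▸ h2⟩)
    · obtain ⟨_, _, hy, _⟩ := g1
      obtain ⟨_, _, hy', _⟩ := h2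
      rw [hy] at hy'; cases hy'
    · exact Or.inr (Or.inr ⟨h1, g2⟩)

lemma bhat_r (hα : IsBrauer α) {x y : Pt n} : (bhat α).r x y ↔ bhatBase α x y :=
  (bhatBase_equiv hα).eqvGen_iff

lemma bhat_no_cross (hα : IsBrauer α) {i j : Fin n} : ¬ (bhat α).r (Sum.inl i) (Sum.inr j) := by
  rw [bhat_r hα]
  rintro (⟨_, h⟩ | ⟨_, h⟩ | ⟨h, _⟩)
  · simp at h
  · exact not_domPt_inr h
  · exact not_codPt_inl h

lemma dom_bhat (hα : IsBrauer α) : dom (bhat α) = ∅ := by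
  ext i
  simp only [Set.mem_empty_iff_false, iff_false]
  rintro ⟨j, hj⟩
  exact bhat_no_cross hα hj

lemma rank_eq_zero_of_dom_empty {γ : Ptn n} (h : dom γ = ∅) : rank γ = 0 := by
  unfold rank
  rw [Set.ncard_eq_zero (Set.toFinite _)]
  ext i
  simp only [Set.mem_setOf_eq, Set.mem_empty_iff_false, iff_false]
  rintro ⟨hi, -⟩
  rw [h] at hi
  exact hi

lemma rank_bhat (hα : IsBrauer α) : rank (bhat α) = 0 :=
  rank_eq_zero_of_dom_empty (dom_bhat hα)

lemma bhat_fix (hα : IsBrauer α) (h0 : rank α = 0) : bhat α = α := by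
  have hd : dom α = ∅ := (rank_eq_zero_iff hα).1 h0
  have hc : codom α = ∅ := codom_eq_empty_iff.2 hd
  apply Setoid.ext
  intro x y
  rw [bhat_r hα]
  constructor
  · rintro (⟨h1, _⟩ | ⟨h1, _⟩ | ⟨h1, _⟩)
    · exact h1
    · obtain ⟨i, j, rfl, hr⟩ := h1
      have hmem : i ∈ dom α := ⟨j, hr⟩
      rw [hd] at hmem; exact hmem.elim
    · obtain ⟨i, j, rfl, hr⟩ := h1
      have hmem : j ∈ codom α := ⟨i, hr⟩
      rw [hc] at hmem; exact hmem.elim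
  · intro h
    refine Or.inl ⟨h, ?_⟩
    rcases x with i | i <;> rcases y with j | j
    · rfl
    · have hmem : i ∈ dom α := ⟨j, h⟩
      rw [hd] at hmem; exact hmem.elim
    · have hmem : j ∈ dom α := ⟨i, α.iseqv.symm h⟩
      rw [hd] at hmem; exact hmem.elim
    · rfl
lemma bhat_brauer (hα : IsBrauer α) (heven : Even ((dom α).ncard))
    (h2 : (dom α).ncard ≤ 2) : IsBrauer (bhat α) := by
  intro x
  rcases x with i | j
  · by_cases hdom : i ∈ dom α
    · have hpos : 0 < (dom α).ncard := (Set.ncard_pos (Set.toFinite _)).2 ⟨i, hdom⟩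
      have hc2 : (dom α).ncard = 2 := by
        obtain ⟨c, hc⟩ := heven; omega
      obtain ⟨a, b, hab, hset⟩ := Set.ncard_eq_two.1 hc2
      have hi : i = a ∨ i = b := by
        have := hdom; rw [hset] at this; simpa using this
      set i₂ : Fin n := if i = a then b else a with hi₂
      have hne2 : i₂ ≠ i := by
        rcases hi with rfl | rfl
        · simp only [hi₂, if_pos rfl]; exact hab.symm
        · rw [hi₂]; split
          · next h => exact fun hh => hab (hh ▸ h).symm
          · exact hab
      have hmem2 : i₂ ∈ dom α := by
        rw [hset, hi₂]; split <;> simp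
      refine ⟨Sum.inl i₂, by simpa using hne2, ?_, ?_⟩
      · exact (bhat_r hα).2 (Or.inr (Or.inl ⟨domPt_inl.2 hdom, domPt_inl.2 hmem2⟩))
      · intro z hz
        rw [bhat_r hα] at hz
        rcases hz with ⟨h1, hrow⟩ | ⟨-, hd⟩ | ⟨hc, -⟩
        · exact Or.inl (row_rel_domPt hα h1 hrow (domPt_inl.2 hdom))
        · obtain ⟨c, k, rfl, hr⟩ := hd
          have hcd : c ∈ dom α := ⟨k, hr⟩
          rw [hset] at hcd
          rcases hcd with rfl | rfl
          · rcases hi with rfl | rfl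
            · exact Or.inl rfl
            · right; rw [hi₂]; split
              · next h => exact absurd h hab.symm
              · rfl
          · rcases hi with rfl | rfl
            · right; rw [hi₂, if_pos rfl]
            · exact Or.inl rfl
        · exact absurd hc not_codPt_inl
    · obtain ⟨i', hbp⟩ := (notMem_dom_iff_bp hα).1 hdom
      refine ⟨bp hα (Sum.inl i), bp_ne hα _, ?_, ?_⟩
      · exact (bhat_r hα).2 (Or.inl ⟨bp_rel hα _, by rw [hbp]; rfl⟩)
      · intro z hz
        rw [bhat_r hα] at hz
        rcases hz with ⟨h1, -⟩ | ⟨hd, -⟩ | ⟨hc, -⟩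
        · exact bp_spec hα h1
        · exact absurd (domPt_inl.1 hd) hdom
        · exact absurd hc not_codPt_inl
  · by_cases hcodom : j ∈ codom α
    · have hpos : 0 < (codom α).ncard := (Set.ncard_pos (Set.toFinite _)).2 ⟨j, hcodom⟩
      have hc2 : (codom α).ncard = 2 := by
        rw [ncard_codom_eq_ncard_dom hα] at hpos ⊢
        obtain ⟨c, hc⟩ := heven; omega
      obtain ⟨a, b, hab, hset⟩ := Set.ncard_eq_two.1 hc2
      have hi : j = a ∨ j = b := by
        have := hcodom; rw [hset] at this; simpa using this
      set j₂ : Fin n := if j = a then b else a with hj₂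
      have hne2 : j₂ ≠ j := by
        rcases hi with rfl | rfl
        · simp only [hj₂, if_pos rfl]; exact hab.symm
        · rw [hj₂]; split
          · next h => exact fun hh => hab (hh ▸ h).symm
          · exact hab
      have hmem2 : j₂ ∈ codom α := by
        rw [hset, hj₂]; split <;> simp
      refine ⟨Sum.inr j₂, by simpa using hne2, ?_, ?_⟩
      · exact (bhat_r hα).2 (Or.inr (Or.inr ⟨codPt_inr.2 hcodom, codPt_inr.2 hmem2⟩))
      · intro z hz
        rw [bhat_r hα] at hz
        rcases hz with ⟨h1, hrow⟩ | ⟨hd, -⟩ | ⟨-, hc⟩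
        · exact Or.inl (row_rel_codPt hα h1 hrow (codPt_inr.2 hcodom))
        · exact absurd hd not_domPt_inr
        · obtain ⟨c, k, rfl, hr⟩ := hc
          have hcd : k ∈ codom α := ⟨c, hr⟩
          rw [hset] at hcd
          rcases hcd with rfl | rfl
          · rcases hi with rfl | rfl
            · exact Or.inl rfl
            · right; rw [hj₂]; split
              · next h => exact absurd h hab.symm
              · rfl
          · rcases hi with rfl | rfl
            · right; rw [hj₂, if_pos rfl]
            · exact Or.inl rfl
    · obtain ⟨j', hbp⟩ := (notMem_codom_iff_bp hα).1 hcodom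
      refine ⟨bp hα (Sum.inr j), bp_ne hα _, ?_, ?_⟩
      · exact (bhat_r hα).2 (Or.inl ⟨bp_rel hα _, by rw [hbp]; rfl⟩)
      · intro z hz
        rw [bhat_r hα] at hz
        rcases hz with ⟨h1, -⟩ | ⟨hd, -⟩ | ⟨hc, -⟩
        · exact bp_spec hα h1
        · exact absurd hd not_domPt_inr
        · exact absurd (codPt_inr.1 hc) hcodom
/-- middle-layer vertex -/
def mid {n : ℕ} (k : Fin n) : Fin n ⊕ Pt n := Sum.inr (Sum.inl k)

lemma iota1_inj {n : ℕ} : Function.Injective (iota1 (n := n)) := by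
  rintro (a | a) (b | b) h <;> simp [iota1] at h <;> simp [h]

lemma iota2_inj {n : ℕ} : Function.Injective (iota2 (n := n)) := by
  rintro (a | a) (b | b) h <;> simp [iota2] at h <;> simp [h]

lemma iota3_inj {n : ℕ} : Function.Injective (iota3 (n := n)) := by
  rintro (a | a) (b | b) h <;> simp [iota3] at h <;> simp [h]

lemma mulBase_symm (α β : Ptn n) : ∀ a b, mulBase α β a b → mulBase α β b a := by
  rintro a b (⟨x, y, h, hx, hy⟩ | ⟨x, y, h, hx, hy⟩)
  · exact Or.inl ⟨y, x, α.iseqv.symm h, hy, hx⟩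
  · exact Or.inr ⟨y, x, β.iseqv.symm h, hy, hx⟩

lemma mulBase_left {α β : Ptn n} {x y : Pt n} (h : α.r x y) :
    mulBase α β (iota1 x) (iota1 y) := Or.inl ⟨x, y, h, rfl, rfl⟩

lemma mulBase_right {α β : Ptn n} {x y : Pt n} (h : β.r x y) :
    mulBase α β (iota2 x) (iota2 y) := Or.inr ⟨x, y, h, rfl, rfl⟩

lemma mulBase_nbr (hα : IsBrauer α) {β : Ptn n} (hβ : IsBrauer β) {a b : Fin n ⊕ Pt n}
    (h : mulBase α β a b) :
    b = a ∨
    (∃ i, a = Sum.inl i ∧ b = iota1 (bp hα (Sum.inl i))) ∨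
    (∃ k, a = mid k ∧ (b = iota1 (bp hα (Sum.inr k)) ∨ b = iota2 (bp hβ (Sum.inl k)))) ∨
    (∃ j, a = Sum.inr (Sum.inr j) ∧ b = iota2 (bp hβ (Sum.inr j))) := by
  rcases h with ⟨x, y, hxy, hx, hy⟩ | ⟨x, y, hxy, hx, hy⟩
  · rcases bp_spec hα hxy with rfl | rfl
    · left; rw [← hx, ← hy]
    · rcases x with i | k
      · right; left; exact ⟨i, hx.symm, hy.symm⟩
      · right; right; left; exact ⟨k, hx.symm, Or.inl hy.symm⟩
  · rcases bp_spec hβ hxy with rfl | rfl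
    · left; rw [← hx, ← hy]
    · rcases x with k | j
      · right; right; left; exact ⟨k, hx.symm, Or.inr hy.symm⟩
      · right; right; right; exact ⟨j, hx.symm, hy.symm⟩

/-- One step of the alternating walk through the middle layer.  The boolean is `true`
if the next edge to use is an `α`-edge. -/
noncomputable def Fstep (hα : IsBrauer α) {β : Ptn n} (hβ : IsBrauer β)
    (s : Fin n × Bool) : Pt n ⊕ (Fin n × Bool) :=
  if s.2 then
    match bp hα (Sum.inr s.1) with
    | Sum.inl i => Sum.inl (Sum.inl i)
    | Sum.inr k => Sum.inr (k, false)
  else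
    match bp hβ (Sum.inl s.1) with
    | Sum.inl k => Sum.inr (k, true)
    | Sum.inr j => Sum.inl (Sum.inr j)

variable {hα : IsBrauer α} {hβ : IsBrauer β}

lemma Fstep_inr_true {s : Fin n × Bool} {k' : Fin n}
    (h : Fstep hα hβ s = Sum.inr (k', true)) :
    s.2 = false ∧ bp hβ (Sum.inl s.1) = Sum.inl k' := by
  unfold Fstep at h
  rcases s with ⟨k, d⟩
  rcases d <;> simp only [if_true, if_false, Bool.false_eq_true] at h ⊢
  · constructor
    · trivial
    · rcases hb : bp hβ (Sum.inl k) with k'' | j <;> rw [hb] at h <;> simp_all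
  · rcases hb : bp hα (Sum.inr k) with i | k'' <;> rw [hb] at h <;> simp_all

lemma Fstep_inr_false {s : Fin n × Bool} {k' : Fin n}
    (h : Fstep hα hβ s = Sum.inr (k', false)) :
    s.2 = true ∧ bp hα (Sum.inr s.1) = Sum.inr k' := by
  unfold Fstep at h
  rcases s with ⟨k, d⟩
  rcases d <;> simp only [if_true, if_false, Bool.false_eq_true] at h ⊢
  · rcases hb : bp hβ (Sum.inl k) with k'' | j <;> rw [hb] at h <;> simp_all
  · constructor
    · trivial
    · rcases hb : bp hα (Sum.inr k) with i | k'' <;> rw [hb] at h <;> simp_all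

lemma Fstep_inl_inl {s : Fin n × Bool} {i : Fin n}
    (h : Fstep hα hβ s = Sum.inl (Sum.inl i)) :
    s.2 = true ∧ bp hα (Sum.inr s.1) = Sum.inl i := by
  unfold Fstep at h
  rcases s with ⟨k, d⟩
  rcases d <;> simp only [if_true, if_false, Bool.false_eq_true] at h ⊢
  · rcases hb : bp hβ (Sum.inl k) with k'' | j <;> rw [hb] at h <;> simp_all
  · constructor
    · trivial
    · rcases hb : bp hα (Sum.inr k) with i' | k'' <;> rw [hb] at h <;> simp_all

lemma Fstep_inl_inr {s : Fin n × Bool} {j : Fin n}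
    (h : Fstep hα hβ s = Sum.inl (Sum.inr j)) :
    s.2 = false ∧ bp hβ (Sum.inl s.1) = Sum.inr j := by
  unfold Fstep at h
  rcases s with ⟨k, d⟩
  rcases d <;> simp only [if_true, if_false, Bool.false_eq_true] at h ⊢
  · constructor
    · trivial
    · rcases hb : bp hβ (Sum.inl k) with k'' | j' <;> rw [hb] at h <;> simp_all
  · rcases hb : bp hα (Sum.inr k) with i' | k'' <;> rw [hb] at h <;> simp_all

lemma Fstep_of_true {k k' : Fin n} (h : bp hα (Sum.inr k) = Sum.inr k') :
    Fstep hα hβ (k, true) = Sum.inr (k', false) := by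
  unfold Fstep; rw [if_pos rfl]; simp only; rw [h]

lemma Fstep_of_false {k k' : Fin n} (h : bp hβ (Sum.inl k) = Sum.inl k') :
    Fstep hα hβ (k, false) = Sum.inr (k', true) := by
  unfold Fstep; rw [if_neg (by simp)]; simp only; rw [h]

lemma Fstep_inj {s t : Fin n × Bool} (h : Fstep hα hβ s = Fstep hα hβ t) : s = t := by
  rcases hv : Fstep hα hβ s with e | ⟨k', d'⟩
  · rw [hv] at h
    rcases e with i | j
    · obtain ⟨hs2, hsb⟩ := Fstep_inl_inl hv
      obtain ⟨ht2, htb⟩ := Fstep_inl_inl h.symm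
      have := bp_inj hα (hsb.trans htb.symm)
      rw [Sum.inr.injEq] at this
      exact Prod.ext this (hs2.trans ht2.symm)
    · obtain ⟨hs2, hsb⟩ := Fstep_inl_inr hv
      obtain ⟨ht2, htb⟩ := Fstep_inl_inr h.symm
      have := bp_inj hβ (hsb.trans htb.symm)
      rw [Sum.inl.injEq] at this
      exact Prod.ext this (hs2.trans ht2.symm)
  · rw [hv] at h
    rcases d'
    · obtain ⟨hs2, hsb⟩ := Fstep_inr_false hv
      obtain ⟨ht2, htb⟩ := Fstep_inr_false h.symm
      have := bp_inj hα (hsb.trans htb.symm)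
      rw [Sum.inr.injEq] at this
      exact Prod.ext this (hs2.trans ht2.symm)
    · obtain ⟨hs2, hsb⟩ := Fstep_inr_true hv
      obtain ⟨ht2, htb⟩ := Fstep_inr_true h.symm
      have := bp_inj hβ (hsb.trans htb.symm)
      rw [Sum.inl.injEq] at this
      exact Prod.ext this (hs2.trans ht2.symm)

lemma Fstep_mirror {s s' : Fin n × Bool} (h : Fstep hα hβ s = Sum.inr s') :
    Fstep hα hβ (s'.1, !s'.2) = Sum.inr (s.1, !s.2) := by
  rcases s' with ⟨k', d'⟩
  rcases d'
  · obtain ⟨hs2, hsb⟩ := Fstep_inr_false h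
    have hb : bp hα (Sum.inr k') = Sum.inr s.1 := by rw [← hsb, bp_invol]
    rw [hs2]
    exact Fstep_of_true hb
  · obtain ⟨hs2, hsb⟩ := Fstep_inr_true h
    have hb : bp hβ (Sum.inl k') = Sum.inl s.1 := by rw [← hsb, bp_invol]
    rw [hs2]
    exact Fstep_of_false hb

/-- The walk, iterated. -/
noncomputable def walkAux (hα : IsBrauer α) {β : Ptn n} (hβ : IsBrauer β)
    (s₀ : Fin n × Bool) : ℕ → Pt n ⊕ (Fin n × Bool)
  | 0 => Sum.inr s₀
  | t + 1 =>
    match walkAux hα hβ s₀ t with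
    | Sum.inl e => Sum.inl e
    | Sum.inr s => Fstep hα hβ s
lemma walkAux_succ_inr {s₀ : Fin n × Bool} {t : ℕ} {s : Fin n × Bool}
    (h : walkAux hα hβ s₀ t = Sum.inr s) :
    walkAux hα hβ s₀ (t + 1) = Fstep hα hβ s := by
  show (match walkAux hα hβ s₀ t with
    | Sum.inl e => Sum.inl e
    | Sum.inr s => Fstep hα hβ s) = _
  rw [h]

lemma walkAux_succ_inl {s₀ : Fin n × Bool} {t : ℕ} {e : Pt n}
    (h : walkAux hα hβ s₀ t = Sum.inl e) :
    walkAux hα hβ s₀ (t + 1) = Sum.inl e := by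
  show (match walkAux hα hβ s₀ t with
    | Sum.inl e => Sum.inl e
    | Sum.inr s => Fstep hα hβ s) = _
  rw [h]

lemma walkAux_succ_inv {s₀ : Fin n × Bool} {t : ℕ} {s : Fin n × Bool}
    (h : walkAux hα hβ s₀ (t + 1) = Sum.inr s) :
    ∃ s', walkAux hα hβ s₀ t = Sum.inr s' ∧ Fstep hα hβ s' = Sum.inr s := by
  rcases hv : walkAux hα hβ s₀ t with e | s'
  · rw [walkAux_succ_inl hv] at h; cases h
  · exact ⟨s', rfl, by rw [walkAux_succ_inr hv] at h; exact h⟩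

lemma walk_no_repeat {s₀ : Fin n × Bool} (h0 : ∀ s, Fstep hα hβ s ≠ Sum.inr s₀) :
    ∀ t t', t < t' → ∀ s, walkAux hα hβ s₀ t' = Sum.inr s →
      walkAux hα hβ s₀ t ≠ Sum.inr s := by
  intro t
  induction t with
  | zero =>
    intro t' ht' s hs' hs
    have hss : s = s₀ := by
      have : walkAux hα hβ s₀ 0 = Sum.inr s₀ := rfl
      rw [this] at hs; exact (Sum.inr.injEq _ _ ▸ hs).symm
    subst hss
    obtain ⟨u, rfl⟩ : ∃ u, t' = u + 1 := ⟨t' - 1, by omega⟩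
    obtain ⟨s', _, hF⟩ := walkAux_succ_inv hs'
    exact h0 s' hF
  | succ v ih =>
    intro t' ht' s hs' hs
    obtain ⟨u, rfl⟩ : ∃ u, t' = u + 1 := ⟨t' - 1, by omega⟩
    obtain ⟨su, hu, hFu⟩ := walkAux_succ_inv hs'
    obtain ⟨sv, hv, hFv⟩ := walkAux_succ_inv hs
    have : su = sv := Fstep_inj (hFu.trans hFv.symm)
    subst this
    exact ih u (by omega) su hu hv

lemma walk_exits {s₀ : Fin n × Bool} (h0 : ∀ s, Fstep hα hβ s ≠ Sum.inr s₀) :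
    ∃ t, (walkAux hα hβ s₀ t).isLeft = true := by
  by_contra hno
  push_neg at hno
  have hst : ∀ t, ∃ s, walkAux hα hβ s₀ t = Sum.inr s := by
    intro t
    rcases hv : walkAux hα hβ s₀ t with e | s
    · exact absurd (by rw [hv]; rfl) (hno t)
    · exact ⟨s, rfl⟩
  set f : ℕ → Fin n × Bool := fun t => (hst t).choose with hf
  obtain ⟨a, b, hab, heq⟩ := Finite.exists_ne_map_eq_of_infinite f
  rcases Nat.lt_or_ge a b with h | h
  · exact walk_no_repeat h0 a b h (f b) (hst b).choose_spec
      ((hst a).choose_spec.trans (congrArg Sum.inr heq))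
  · have hlt : b < a := by omega
    exact walk_no_repeat h0 b a hlt (f a) (hst a).choose_spec
      ((hst b).choose_spec.trans (congrArg Sum.inr heq.symm))

lemma walk_chain {s₀ : Fin n × Bool} :
    ∀ t s, walkAux hα hβ s₀ t = Sum.inr s →
      Relation.EqvGen (mulBase α β) (mid s₀.1) (mid s.1) := by
  intro t
  induction t with
  | zero =>
    intro s hs
    have : s = s₀ := by
      have h : walkAux hα hβ s₀ 0 = Sum.inr s₀ := rfl
      rw [h] at hs; exact (Sum.inr.injEq _ _ ▸ hs).symm
    subst this
    exact Relation.EqvGen.refl _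
  | succ t ih =>
    intro s hs
    obtain ⟨s', hs', hF⟩ := walkAux_succ_inv hs
    refine Relation.EqvGen.trans _ _ _ (ih s' hs') (Relation.EqvGen.rel _ _ ?_)
    rcases s with ⟨k, d⟩
    rcases d
    · obtain ⟨h1, h2⟩ := Fstep_inr_false hF
      have := mulBase_left (β := β) (bp_rel hα (Sum.inr s'.1))
      rw [h2] at this
      exact this
    · obtain ⟨h1, h2⟩ := Fstep_inr_true hF
      have := mulBase_right (α := α) (bp_rel hβ (Sum.inl s'.1))
      rw [h2] at this
      exact this

lemma walk_palindrome {s₀ : Fin n × Bool} (h0 : ∀ s, Fstep hα hβ s ≠ Sum.inr s₀)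
    {N : ℕ} (hNpos : 0 < N)
    (hst : ∀ t, t < N → ∃ s, walkAux hα hβ s₀ t = Sum.inr s)
    (hsl : walkAux hα hβ s₀ (N - 1) = Sum.inr (s₀.1, !s₀.2)) : False := by
  have claim : ∀ t, t ≤ N - 1 → ∀ s, walkAux hα hβ s₀ t = Sum.inr s →
      walkAux hα hβ s₀ (N - 1 - t) = Sum.inr (s.1, !s.2) := by
    intro t
    induction t with
    | zero =>
      intro _ s hs
      have : s = s₀ := by
        have h : walkAux hα hβ s₀ 0 = Sum.inr s₀ := rfl
        rw [h] at hs; exact (Sum.inr.injEq _ _ ▸ hs).symm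
      subst this
      simpa using hsl
    | succ t ih =>
      intro ht s hs
      obtain ⟨s', hs', hF⟩ := walkAux_succ_inv hs
      have hmir := Fstep_mirror (hα := hα) (hβ := hβ) hF
      have hIH := ih (by omega) s' hs'
      have hge : 1 ≤ N - 1 - t := by omega
      obtain ⟨u, hu⟩ : ∃ u, N - 1 - t = u + 1 := ⟨N - 2 - t, by omega⟩
      rw [hu] at hIH
      obtain ⟨s'', hs'', hF''⟩ := walkAux_succ_inv hIH
      have : s'' = (s.1, !s.2) := Fstep_inj (hF''.trans hmir.symm)
      subst this
      have : N - 1 - (t + 1) = u := by omega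
      rw [this]
      exact hs''
  rcases Nat.even_or_odd (N - 1) with ⟨u, hu⟩ | ⟨u, hu⟩
  · obtain ⟨su, hsu⟩ := hst u (by omega)
    have := claim u (by omega) su hsu
    have heq : N - 1 - u = u := by omega
    rw [heq, hsu] at this
    have h2 : su = (su.1, !su.2) := Sum.inr_injective this
    have : su.2 = !su.2 := congrArg Prod.snd h2
    simp at this
  · obtain ⟨su, hsu⟩ := hst u (by omega)
    have hcl := claim u (by omega) su hsu
    have heq : N - 1 - u = u + 1 := by omega
    rw [heq] at hcl
    have hstep : walkAux hα hβ s₀ (u + 1) = Fstep hα hβ su := walkAux_succ_inr hsu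
    rw [hstep] at hcl
    rcases hb : su.2
    · rw [hb] at hcl
      obtain ⟨-, h2⟩ := Fstep_inr_true hcl
      exact bp_ne hβ _ (by rw [h2])
    · rw [hb] at hcl
      obtain ⟨-, h2⟩ := Fstep_inr_false hcl
      exact bp_ne hα _ (by rw [h2])
lemma iota1_eq_inl {z : Pt n} {i : Fin n} : iota1 z = Sum.inl i ↔ z = Sum.inl i := by
  rcases z with a | a <;> simp [iota1]

lemma iota1_eq_mid {z : Pt n} {k : Fin n} : iota1 z = mid k ↔ z = Sum.inr k := by
  rcases z with a | a <;> simp [iota1, mid]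

lemma iota1_ne_bot {z : Pt n} {j : Fin n} : iota1 z ≠ Sum.inr (Sum.inr j) := by
  rcases z with a | a <;> simp [iota1]

lemma iota2_ne_inl {z : Pt n} {i : Fin n} : iota2 z ≠ Sum.inl i := by
  rcases z with a | a <;> simp [iota2]

lemma iota2_eq_mid {z : Pt n} {k : Fin n} : iota2 z = mid k ↔ z = Sum.inl k := by
  rcases z with a | a <;> simp [iota2, mid]

lemma iota2_eq_bot {z : Pt n} {j : Fin n} : iota2 z = Sum.inr (Sum.inr j) ↔ z = Sum.inr j := by
  rcases z with a | a <;> simp [iota2]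

lemma iota3_ne_mid {z : Pt n} {k : Fin n} : iota3 z ≠ mid k := by
  rcases z with a | a <;> simp [iota3, mid]

lemma walk_core {s₀ : Fin n × Bool} {x : Pt n}
    (h0 : ∀ s, Fstep hα hβ s ≠ Sum.inr s₀)
    (hback : (if s₀.2 then iota2 (bp hβ (Sum.inl s₀.1)) else iota1 (bp hα (Sum.inr s₀.1)))
      = iota3 x) :
    ∃ e : Pt n, e ≠ x ∧
      Relation.EqvGen (mulBase α β) (iota3 x) (iota3 e) ∧
      (∀ v, Relation.EqvGen (mulBase α β) (iota3 x) v →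
        v = iota3 x ∨ v = iota3 e ∨ ∃ k, v = mid k) ∧
      (∀ i, e = Sum.inl i → i ∈ dom α) ∧ (∀ j, e = Sum.inr j → j ∈ codom β) := by
  classical
  obtain ⟨hex⟩ : Nonempty (∃ t, (walkAux hα hβ s₀ t).isLeft = true) := ⟨walk_exits h0⟩
  set N := Nat.find hex with hNdef
  have hNl : (walkAux hα hβ s₀ N).isLeft = true := Nat.find_spec hex
  have hmin : ∀ t, t < N → ¬ (walkAux hα hβ s₀ t).isLeft = true := fun t ht =>
    Nat.find_min hex ht
  have hst : ∀ t, t < N → ∃ s, walkAux hα hβ s₀ t = Sum.inr s := by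
    intro t ht
    rcases hv : walkAux hα hβ s₀ t with e | s
    · exact absurd (by rw [hv]; rfl) (hmin t ht)
    · exact ⟨s, rfl⟩
  obtain ⟨e, he⟩ : ∃ e, walkAux hα hβ s₀ N = Sum.inl e := by
    rcases hv : walkAux hα hβ s₀ N with e | s
    · exact ⟨e, rfl⟩
    · rw [hv] at hNl; cases hNl
  have hNpos : 0 < N := by
    rcases Nat.eq_zero_or_pos N with h | h
    · have h0' : walkAux hα hβ s₀ 0 = Sum.inr s₀ := rfl
      rw [h] at he; rw [h0'] at he; cases he
    · exact h
  obtain ⟨sl, hsl⟩ := hst (N - 1) (by omega)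
  have hexit : Fstep hα hβ sl = Sum.inl e := by
    have := walkAux_succ_inr hsl
    rw [show N - 1 + 1 = N by omega, he] at this
    exact this.symm
  -- the two possible shapes of the exit step
  have hedom : ∀ i, e = Sum.inl i → i ∈ dom α := by
    rintro i rfl
    obtain ⟨h1, h2⟩ := Fstep_inl_inl hexit
    exact (mem_dom_iff_bp hα).2 ⟨sl.1, by rw [← h2, bp_invol]⟩
  have hecod : ∀ j, e = Sum.inr j → j ∈ codom β := by
    rintro j rfl
    obtain ⟨h1, h2⟩ := Fstep_inl_inr hexit
    exact ⟨sl.1, by rw [← h2]; exact bp_rel hβ _⟩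
  -- start edge
  have hstart : Relation.EqvGen (mulBase α β) (iota3 x) (mid s₀.1) := by
    rcases hd : s₀.2
    · rw [hd] at hback; rw [if_neg Bool.false_ne_true] at hback
      apply Relation.EqvGen.symm
      apply Relation.EqvGen.rel
      have := mulBase_left (β := β) (bp_rel hα (Sum.inr s₀.1))
      rw [hback] at this
      exact this
    · rw [hd] at hback; rw [if_pos rfl] at hback
      apply Relation.EqvGen.symm
      apply Relation.EqvGen.rel
      have := mulBase_right (α := α) (bp_rel hβ (Sum.inl s₀.1))
      rw [hback] at this
      exact this
  -- exit edge
  have hexitrel : Relation.EqvGen (mulBase α β) (mid sl.1) (iota3 e) := by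
    rcases e with i | j
    · obtain ⟨h1, h2⟩ := Fstep_inl_inl hexit
      apply Relation.EqvGen.rel
      have := mulBase_left (β := β) (bp_rel hα (Sum.inr sl.1))
      rw [h2] at this
      exact this
    · obtain ⟨h1, h2⟩ := Fstep_inl_inr hexit
      apply Relation.EqvGen.rel
      have := mulBase_right (α := α) (bp_rel hβ (Sum.inl sl.1))
      rw [h2] at this
      exact this
  have hrel : Relation.EqvGen (mulBase α β) (iota3 x) (iota3 e) :=
    Relation.EqvGen.trans _ _ _
      (Relation.EqvGen.trans _ _ _ hstart (walk_chain (N - 1) sl hsl)) hexitrel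
  -- e ≠ x via the palindrome argument
  have hne : e ≠ x := by
    rintro rfl
    have hslval : sl = (s₀.1, !s₀.2) := by
      rcases e with i | j
      · obtain ⟨h1, h2⟩ := Fstep_inl_inl hexit
        rcases hd : s₀.2
        · rw [hd] at hback; rw [if_neg Bool.false_ne_true] at hback
          have hb : bp hα (Sum.inr s₀.1) = Sum.inl i := iota1_eq_inl.1 hback
          have : Sum.inr sl.1 = (Sum.inr s₀.1 : Pt n) := bp_inj hα (h2.trans hb.symm)
          have h1' : sl.1 = s₀.1 := Sum.inr_injective this
          rcases sl with ⟨a, b⟩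
          exact Prod.ext h1' h1
        · rw [hd] at hback; rw [if_pos rfl] at hback
          exact absurd hback iota2_ne_inl
      · obtain ⟨h1, h2⟩ := Fstep_inl_inr hexit
        rcases hd : s₀.2
        · rw [hd] at hback; rw [if_neg Bool.false_ne_true] at hback
          exact absurd hback iota1_ne_bot
        · rw [hd] at hback; rw [if_pos rfl] at hback
          have hb : bp hβ (Sum.inl s₀.1) = Sum.inr j := iota2_eq_bot.1 hback
          have : Sum.inl sl.1 = (Sum.inl s₀.1 : Pt n) := bp_inj hβ (h2.trans hb.symm)
          have h1' : sl.1 = s₀.1 := Sum.inl_injective this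
          rcases sl with ⟨a, b⟩
          exact Prod.ext h1' h1
    rw [hslval] at hsl
    exact walk_palindrome h0 hNpos hst hsl
  -- the closed set
  set C : Set (Fin n ⊕ Pt n) := {v | v = iota3 x ∨ v = iota3 e ∨
    ∃ t, t < N ∧ ∃ s, walkAux hα hβ s₀ t = Sum.inr s ∧ v = mid s.1} with hC
  have hxC : iota3 x ∈ C := Or.inl rfl
  have hclosed : ∀ a ∈ C, ∀ b, mulBase α β a b → b ∈ C := by
    intro a ha b hab
    rcases mulBase_nbr hα hβ hab with rfl | ⟨i, rfl, rfl⟩ | ⟨k, rfl, hb⟩ | ⟨j, rfl, rfl⟩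
    · exact ha
    · -- a = Sum.inl i
      rcases ha with hax | hae | ⟨t, ht, s, hs, habs⟩
      · -- iota3 x = Sum.inl i, so x = Sum.inl i and s₀.2 = false
        rcases x with i' | j'
        · have hii : i' = i := Sum.inl_injective hax.symm
          subst hii
          rcases hd : s₀.2
          · rw [hd] at hback; rw [if_neg Bool.false_ne_true] at hback
            have hb : bp hα (Sum.inr s₀.1) = Sum.inl i' := iota1_eq_inl.1 hback
            have hb2 : bp hα (Sum.inl i') = Sum.inr s₀.1 := by rw [← hb, bp_invol]
            rw [hb2]
            exact Or.inr (Or.inr ⟨0, hNpos, s₀, rfl, rfl⟩)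
          · rw [hd] at hback
            rw [if_pos rfl] at hback
            exact absurd hback iota2_ne_inl
        · cases hax
      · -- iota3 e = Sum.inl i, so e = Sum.inl i
        rcases e with i' | j'
        · have hii : i' = i := Sum.inl_injective hae.symm
          subst hii
          obtain ⟨h1, h2⟩ := Fstep_inl_inl hexit
          have hb2 : bp hα (Sum.inl i') = Sum.inr sl.1 := by rw [← h2, bp_invol]
          rw [hb2]
          exact Or.inr (Or.inr ⟨N - 1, by omega, sl, hsl, rfl⟩)
        · cases hae
      · simp [mid] at habs
    · -- a = mid k
      rcases ha with hax | hae | ⟨t, ht, s, hs, habs⟩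
      · exact absurd hax.symm iota3_ne_mid
      · exact absurd hae.symm iota3_ne_mid
      · have hks : k = s.1 := by
          have := habs
          simp only [mid, Sum.inr.injEq, Sum.inl.injEq] at this
          exact this
        subst hks
        rcases hb with rfl | rfl
        · -- α-edge at middle s.1
          rcases hd : s.2
          · -- arrived via α: predecessor or start
            rcases Nat.eq_zero_or_pos t with rfl | htpos
            · have hss : s = s₀ := by
                have h' : walkAux hα hβ s₀ 0 = Sum.inr s₀ := rfl
                rw [h'] at hs; exact (Sum.inr_injective hs).symm
              subst hss
              rw [hd] at hback; rw [if_neg Bool.false_ne_true] at hback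
              rw [hback]
              exact Or.inl rfl
            · obtain ⟨u, rfl⟩ : ∃ u, t = u + 1 := ⟨t - 1, by omega⟩
              obtain ⟨s', hs', hF⟩ := walkAux_succ_inv hs
              have hF' : Fstep hα hβ s' = Sum.inr (s.1, false) := by
                rw [hF]; congr 1; rcases s with ⟨a1, a2⟩; simp only at hd ⊢; rw [hd]
              obtain ⟨h1, h2⟩ := Fstep_inr_false hF'
              have hb2 : bp hα (Sum.inr s.1) = Sum.inr s'.1 := by rw [← h2, bp_invol]
              rw [hb2]
              exact Or.inr (Or.inr ⟨u, by omega, s', hs', rfl⟩)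
          · -- next step uses α
            rcases hv : bp hα (Sum.inr s.1) with i'' | k''
            · -- exit upward
              have hFs : Fstep hα hβ s = Sum.inl (Sum.inl i'') := by
                have : Fstep hα hβ s = Fstep hα hβ (s.1, true) := by
                  congr 1; rcases s with ⟨a1, a2⟩; simp only at hd ⊢; rw [hd]
                rw [this]
                unfold Fstep; rw [if_pos rfl]; simp only; rw [hv]
              have hw : walkAux hα hβ s₀ (t + 1) = Sum.inl (Sum.inl i'') := by
                rw [walkAux_succ_inr hs, hFs]
              have hNle : N ≤ t + 1 := Nat.find_le (by rw [hw]; rfl)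
              have hNt : N = t + 1 := by omega
              have hee : e = Sum.inl i'' := by
                rw [hNt, hw] at he; exact (Sum.inl_injective he.symm)
              exact Or.inr (Or.inl (by rw [hee]; rfl))
            · -- continue to middle k''
              have hFs : Fstep hα hβ s = Sum.inr (k'', false) := by
                have : Fstep hα hβ s = Fstep hα hβ (s.1, true) := by
                  congr 1; rcases s with ⟨a1, a2⟩; simp only at hd ⊢; rw [hd]
                rw [this]
                exact Fstep_of_true hv
              have hw : walkAux hα hβ s₀ (t + 1) = Sum.inr (k'', false) := by
                rw [walkAux_succ_inr hs, hFs]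
              have ht1 : t + 1 < N := by
                rcases Nat.lt_or_ge (t + 1) N with h | h
                · exact h
                · have : N ≤ t + 1 := h
                  rcases Nat.eq_or_lt_of_le this with h' | h'
                  · rw [← h'] at hw; rw [he] at hw; cases hw
                  · exact absurd he (by
                      have := hmin N (by omega)
                      intro hcon
                      exact this (by rw [hcon]; rfl))
              exact Or.inr (Or.inr ⟨t + 1, ht1, (k'', false), hw, rfl⟩)
        · -- β-edge at middle s.1
          rcases hd : s.2
          · -- next step uses β
            rcases hv : bp hβ (Sum.inl s.1) with k'' | j''
            · have hFs : Fstep hα hβ s = Sum.inr (k'', true) := by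
                have : Fstep hα hβ s = Fstep hα hβ (s.1, false) := by
                  congr 1; rcases s with ⟨a1, a2⟩; simp only at hd ⊢; rw [hd]
                rw [this]
                exact Fstep_of_false hv
              have hw : walkAux hα hβ s₀ (t + 1) = Sum.inr (k'', true) := by
                rw [walkAux_succ_inr hs, hFs]
              have ht1 : t + 1 < N := by
                rcases Nat.lt_or_ge (t + 1) N with h | h
                · exact h
                · rcases Nat.eq_or_lt_of_le h with h' | h'
                  · rw [← h'] at hw; rw [he] at hw; cases hw
                  · exact absurd he (by
                      have := hmin N (by omega)
                      intro hcon
                      exact this (by rw [hcon]; rfl))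
              exact Or.inr (Or.inr ⟨t + 1, ht1, (k'', true), hw, rfl⟩)
            · -- exit downward
              have hFs : Fstep hα hβ s = Sum.inl (Sum.inr j'') := by
                have : Fstep hα hβ s = Fstep hα hβ (s.1, false) := by
                  congr 1; rcases s with ⟨a1, a2⟩; simp only at hd ⊢; rw [hd]
                rw [this]
                unfold Fstep; rw [if_neg (by simp)]; simp only; rw [hv]
              have hw : walkAux hα hβ s₀ (t + 1) = Sum.inl (Sum.inr j'') := by
                rw [walkAux_succ_inr hs, hFs]
              have hNle : N ≤ t + 1 := Nat.find_le (by rw [hw]; rfl)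
              have hNt : N = t + 1 := by omega
              have hee : e = Sum.inr j'' := by
                rw [hNt, hw] at he; exact (Sum.inl_injective he.symm)
              exact Or.inr (Or.inl (by rw [hee]; rfl))
          · -- arrived via β: predecessor or start
            rcases Nat.eq_zero_or_pos t with rfl | htpos
            · have hss : s = s₀ := by
                have h' : walkAux hα hβ s₀ 0 = Sum.inr s₀ := rfl
                rw [h'] at hs; exact (Sum.inr_injective hs).symm
              subst hss
              rw [hd] at hback; rw [if_pos rfl] at hback
              rw [hback]
              exact Or.inl rfl
            · obtain ⟨u, rfl⟩ : ∃ u, t = u + 1 := ⟨t - 1, by omega⟩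
              obtain ⟨s', hs', hF⟩ := walkAux_succ_inv hs
              have hF' : Fstep hα hβ s' = Sum.inr (s.1, true) := by
                rw [hF]; congr 1; rcases s with ⟨a1, a2⟩; simp only at hd ⊢; rw [hd]
              obtain ⟨h1, h2⟩ := Fstep_inr_true hF'
              have hb2 : bp hβ (Sum.inl s.1) = Sum.inl s'.1 := by rw [← h2, bp_invol]
              rw [hb2]
              exact Or.inr (Or.inr ⟨u, by omega, s', hs', rfl⟩)
    · -- a = bottom j
      rcases ha with hax | hae | ⟨t, ht, s, hs, habs⟩
      · rcases x with i' | j'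
        · cases hax
        · have hjj : j' = j := by
            simp only [iota3, Sum.inr.injEq] at hax
            exact hax.symm
          subst hjj
          rcases hd : s₀.2
          · rw [hd] at hback; rw [if_neg Bool.false_ne_true] at hback
            exact absurd hback iota1_ne_bot
          · rw [hd] at hback; rw [if_pos rfl] at hback
            have hb : bp hβ (Sum.inl s₀.1) = Sum.inr j' := iota2_eq_bot.1 hback
            have hb2 : bp hβ (Sum.inr j') = Sum.inl s₀.1 := by rw [← hb, bp_invol]
            rw [hb2]
            exact Or.inr (Or.inr ⟨0, hNpos, s₀, rfl, rfl⟩)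
      · rcases e with i' | j'
        · cases hae
        · have hjj : j' = j := by
            simp only [iota3, Sum.inr.injEq] at hae
            exact hae.symm
          subst hjj
          obtain ⟨h1, h2⟩ := Fstep_inl_inr hexit
          have hb2 : bp hβ (Sum.inr j') = Sum.inl sl.1 := by rw [← h2, bp_invol]
          rw [hb2]
          exact Or.inr (Or.inr ⟨N - 1, by omega, sl, hsl, rfl⟩)
      · simp [mid] at habs
  refine ⟨e, hne, hrel, ?_, hedom, hecod⟩
  intro v hv
  have := (eqvGen_closed (mulBase_symm α β) hclosed hv).1 hxC
  rcases this with h | h | ⟨t, ht, s, hs, rfl⟩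
  · exact Or.inl h
  · exact Or.inr (Or.inl h)
  · exact Or.inr (Or.inr ⟨s.1, rfl⟩)
lemma walk_main (hα : IsBrauer α) (hβ : IsBrauer β) (x : Pt n) :
    ∃ y, y ≠ x ∧ (pmul α β).r x y ∧ (∀ z, (pmul α β).r x z → z = x ∨ z = y) ∧
      (∀ i i', x = Sum.inl i → y = Sum.inl i' → kerr α i i' ∨ (i ∈ dom α ∧ i' ∈ dom α)) ∧
      (∀ i j, x = Sum.inl i → y = Sum.inr j → i ∈ dom α ∧ j ∈ codom β) ∧
      (∀ j j', x = Sum.inr j → y = Sum.inr j' → cokerr β j j' ∨ (j ∈ codom β ∧ j' ∈ codom β)) ∧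
      (∀ j i, x = Sum.inr j → y = Sum.inl i → i ∈ dom α ∧ j ∈ codom β) := by
  rcases x with i | j
  · rcases hb : bp hα (Sum.inl i) with i' | k
    · -- horizontal top edge
      refine ⟨Sum.inl i', ?_, ?_, ?_, ?_, ?_, ?_, ?_⟩
      · intro h; exact bp_ne hα (Sum.inl i) (by rw [hb, h])
      · apply Relation.EqvGen.rel
        have := mulBase_left (β := β) (bp_rel hα (Sum.inl i))
        rw [hb] at this
        exact this
      · intro z hz
        have hcl : ∀ a ∈ {v : Fin n ⊕ Pt n | v = Sum.inl i ∨ v = Sum.inl i'}, ∀ b,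
            mulBase α β a b → b ∈ {v : Fin n ⊕ Pt n | v = Sum.inl i ∨ v = Sum.inl i'} := by
          rintro a (rfl | rfl) b hab
          · rcases mulBase_nbr hα hβ hab with rfl | ⟨i₂, hi₂, rfl⟩ | ⟨k₂, hk₂, -⟩ | ⟨j₂, hj₂, -⟩
            · exact Or.inl rfl
            · have : i₂ = i := Sum.inl_injective hi₂.symm
              subst this
              rw [hb]
              exact Or.inr rfl
            · cases hk₂
            · cases hj₂
          · rcases mulBase_nbr hα hβ hab with rfl | ⟨i₂, hi₂, rfl⟩ | ⟨k₂, hk₂, -⟩ | ⟨j₂, hj₂, -⟩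
            · exact Or.inr rfl
            · have hb2 : bp hα (Sum.inl i₂) = Sum.inl i := by
                have h4 : i' = i₂ := Sum.inl_injective hi₂
                rw [← h4, ← hb, bp_invol]
              rw [hb2]
              exact Or.inl rfl
            · cases hk₂
            · cases hj₂
        have := (eqvGen_closed (mulBase_symm α β) hcl hz).1 (Or.inl rfl)
        rcases this with h | h
        · rcases z with c | c
          · exact Or.inl (congrArg Sum.inl (Sum.inl_injective h))
          · cases h
        · rcases z with c | c
          · exact Or.inr (congrArg Sum.inl (Sum.inl_injective h))
          · cases h
      · rintro i₁ i₂ h1 h2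
        cases h1
        left
        have h3 : i' = i₂ := Sum.inl_injective h2
        subst h3
        unfold kerr
        rw [← hb]
        exact bp_rel hα _
      · rintro i₁ j₁ h1 h2; cases h2
      · rintro j₁ j₂ h1 h2; cases h1
      · rintro j₁ i₁ h1 h2; cases h1
    · -- proper start
      have hdomi : i ∈ dom α := (mem_dom_iff_bp hα).2 ⟨k, hb⟩
      have hb2 : bp hα (Sum.inr k) = Sum.inl i := by rw [← hb, bp_invol]
      have h0 : ∀ s, Fstep hα hβ s ≠ Sum.inr ((k, false) : Fin n × Bool) := by
        intro s h
        obtain ⟨h1, h2⟩ := Fstep_inr_false h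
        have : bp hα (Sum.inr k) = Sum.inr s.1 := by rw [← h2, bp_invol]
        rw [hb2] at this; cases this
      have hback : (if ((k, false) : Fin n × Bool).2
          then iota2 (bp hβ (Sum.inl ((k, false) : Fin n × Bool).1))
          else iota1 (bp hα (Sum.inr ((k, false) : Fin n × Bool).1)))
          = iota3 (Sum.inl i) := by
        simp only
        rw [if_neg Bool.false_ne_true, hb2]
        rfl
      obtain ⟨e, hne, hrel, hcl, hedom, hecod⟩ := walk_core h0 hback
      refine ⟨e, hne, hrel, ?_, ?_, ?_, ?_, ?_⟩
      · intro z hz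
        rcases hcl (iota3 z) hz with h | h | ⟨k', h⟩
        · exact Or.inl (iota3_inj h)
        · exact Or.inr (iota3_inj h)
        · exact absurd h iota3_ne_mid
      · rintro i₁ i₂ h1 rfl
        cases h1
        exact Or.inr ⟨hdomi, hedom i₂ rfl⟩
      · rintro i₁ j₁ h1 rfl
        cases h1
        exact ⟨hdomi, hecod j₁ rfl⟩
      · rintro j₁ j₂ h1 h2; cases h1
      · rintro j₁ i₁ h1 h2; cases h1
  · rcases hb : bp hβ (Sum.inr j) with k | j'
    · -- proper start from the bottom
      have hcodj : j ∈ codom β := (mem_codom_iff_bp hβ).2 ⟨k, hb⟩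
      have hb2 : bp hβ (Sum.inl k) = Sum.inr j := by rw [← hb, bp_invol]
      have h0 : ∀ s, Fstep hα hβ s ≠ Sum.inr ((k, true) : Fin n × Bool) := by
        intro s h
        obtain ⟨h1, h2⟩ := Fstep_inr_true h
        have : bp hβ (Sum.inl k) = Sum.inl s.1 := by rw [← h2, bp_invol]
        rw [hb2] at this; cases this
      have hback : (if ((k, true) : Fin n × Bool).2
          then iota2 (bp hβ (Sum.inl ((k, true) : Fin n × Bool).1))
          else iota1 (bp hα (Sum.inr ((k, true) : Fin n × Bool).1)))
          = iota3 (Sum.inr j) := by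
        simp only
        rw [if_pos trivial, hb2]
        rfl
      obtain ⟨e, hne, hrel, hcl, hedom, hecod⟩ := walk_core h0 hback
      refine ⟨e, hne, hrel, ?_, ?_, ?_, ?_, ?_⟩
      · intro z hz
        rcases hcl (iota3 z) hz with h | h | ⟨k', h⟩
        · exact Or.inl (iota3_inj h)
        · exact Or.inr (iota3_inj h)
        · exact absurd h iota3_ne_mid
      · rintro i₁ i₂ h1 h2; cases h1
      · rintro i₁ j₁ h1 h2; cases h1
      · rintro j₁ j₂ h1 rfl
        cases h1
        exact Or.inr ⟨hcodj, hecod j₂ rfl⟩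
      · rintro j₁ i₁ h1 rfl
        cases h1
        exact ⟨hedom i₁ rfl, hcodj⟩
    · -- horizontal bottom edge
      refine ⟨Sum.inr j', ?_, ?_, ?_, ?_, ?_, ?_, ?_⟩
      · intro h; exact bp_ne hβ (Sum.inr j) (by rw [hb, h])
      · apply Relation.EqvGen.rel
        have := mulBase_right (α := α) (bp_rel hβ (Sum.inr j))
        rw [hb] at this
        exact this
      · intro z hz
        have hcl : ∀ a ∈ {v : Fin n ⊕ Pt n | v = Sum.inr (Sum.inr j) ∨ v = Sum.inr (Sum.inr j')},
            ∀ b, mulBase α β a b →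
              b ∈ {v : Fin n ⊕ Pt n | v = Sum.inr (Sum.inr j) ∨ v = Sum.inr (Sum.inr j')} := by
          rintro a (rfl | rfl) b hab
          · rcases mulBase_nbr hα hβ hab with rfl | ⟨i₂, hi₂, -⟩ | ⟨k₂, hk₂, -⟩ | ⟨j₂, hj₂, rfl⟩
            · exact Or.inl rfl
            · cases hi₂
            · simp [mid] at hk₂
            · have : j₂ = j := by
                simp only [Sum.inr.injEq] at hj₂
                exact hj₂.symm
              subst this
              rw [hb]
              exact Or.inr rfl
          · rcases mulBase_nbr hα hβ hab with rfl | ⟨i₂, hi₂, -⟩ | ⟨k₂, hk₂, -⟩ | ⟨j₂, hj₂, rfl⟩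
            · exact Or.inr rfl
            · cases hi₂
            · simp [mid] at hk₂
            · have hb2 : bp hβ (Sum.inr j₂) = Sum.inr j := by
                have h4 : j' = j₂ := by
                  simp only [Sum.inr.injEq] at hj₂
                  exact hj₂
                rw [← h4, ← hb, bp_invol]
              rw [hb2]
              exact Or.inl rfl
        have := (eqvGen_closed (mulBase_symm α β) hcl hz).1 (Or.inl rfl)
        rcases this with h | h
        · rcases z with c | c
          · cases h
          · exact Or.inl (congrArg Sum.inr (Sum.inr_injective (Sum.inr_injective h)))
        · rcases z with c | c
          · cases h
          · exact Or.inr (congrArg Sum.inr (Sum.inr_injective (Sum.inr_injective h)))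
      · rintro i₁ i₂ h1 h2; cases h1
      · rintro i₁ j₁ h1 h2; cases h1
      · rintro j₁ j₂ h1 h2
        cases h1
        left
        have h3 : j' = j₂ := Sum.inr_injective h2
        subst h3
        unfold cokerr
        rw [← hb]
        exact bp_rel hβ _
      · rintro j₁ i₁ h1 h2; cases h2
lemma pmul_brauer (hα : IsBrauer α) (hβ : IsBrauer β) : IsBrauer (pmul α β) := by
  intro x
  obtain ⟨y, hne, hrel, huniq, -⟩ := walk_main hα hβ x
  exact ⟨y, hne, hrel, huniq⟩

lemma dom_pmul_subset (hα : IsBrauer α) (hβ : IsBrauer β) : dom (pmul α β) ⊆ dom α := by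
  rintro i ⟨j, hij⟩
  obtain ⟨y, hne, hrel, huniq, hK1, hK2, -⟩ := walk_main hα hβ (Sum.inl i)
  rcases huniq _ hij with h | h
  · cases h
  · exact (hK2 i j rfl h.symm).1

lemma codom_pmul_subset (hα : IsBrauer α) (hβ : IsBrauer β) : codom (pmul α β) ⊆ codom β := by
  rintro j ⟨i, hij⟩
  obtain ⟨y, hne, hrel, huniq, hK1, hK2, -⟩ := walk_main hα hβ (Sum.inl i)
  rcases huniq _ hij with h | h
  · cases h
  · exact (hK2 i j rfl h.symm).2

lemma three_le_ncard {s : Set (Fin n)} {a b c : Fin n} (ha : a ∈ s) (hb : b ∈ s) (hc : c ∈ s)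
    (hab : a ≠ b) (hac : a ≠ c) (hbc : b ≠ c) : 3 ≤ s.ncard := by
  have hsub : ({a, b, c} : Set (Fin n)) ⊆ s := by
    rintro x (rfl | rfl | rfl) <;> assumption
  have h3 : ({a, b, c} : Set (Fin n)).ncard = 3 := by
    rw [Set.ncard_insert_of_notMem (by simp [hab, hac]) (Set.toFinite _), Set.ncard_pair hbc]
  rw [← h3]
  exact Set.ncard_le_ncard hsub (Set.toFinite _)

lemma mem_dom_third {s : Set (Fin n)} (h2 : s.ncard ≤ 2) {i j c : Fin n} (hi : i ∈ s)
    (hj : j ∈ s) (hc : c ∈ s) (hij : i ≠ j) (hci : c ≠ i) : c = j := by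
  by_contra hcj
  have := three_le_ncard hi hj hc hij (Ne.symm hci) (fun h => hcj h.symm)
  omega

/-- For `i` in the domain, a nontrivial kernel relation is impossible (Brauer). -/
lemma kerr_eq_of_dom (hα : IsBrauer α) {i j : Fin n} (hi : i ∈ dom α) (h : kerr α i j) :
    j = i := by
  obtain ⟨k, hk⟩ := (mem_dom_iff_bp hα).1 hi
  rcases bp_spec hα h with h' | h'
  · exact Sum.inl_injective h'
  · rw [hk] at h'; cases h'

lemma ker_dom_pmul (hα : IsBrauer α) (hβ : IsBrauer β) (h2 : (dom α).ncard ≤ 2) (i j : Fin n) :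
    (kerr (pmul α β) i j ∨ (i ∈ dom (pmul α β) ∧ j ∈ dom (pmul α β))) ↔
      (kerr α i j ∨ (i ∈ dom α ∧ j ∈ dom α)) := by
  constructor
  · rintro (h | ⟨hi, hj⟩)
    · by_cases hij : i = j
      · subst hij; exact Or.inl (α.iseqv.refl _)
      · obtain ⟨y, hne, hrel, huniq, hK1, hK2, -⟩ := walk_main hα hβ (Sum.inl i)
        rcases huniq _ h with h' | h'
        · exact absurd (Sum.inl_injective h') (Ne.symm hij)
        · exact hK1 i j rfl h'.symm
    · exact Or.inr ⟨dom_pmul_subset hα hβ hi, dom_pmul_subset hα hβ hj⟩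
  · rintro (h | ⟨hi, hj⟩)
    · exact Or.inl (Relation.EqvGen.rel _ _ (mulBase_left h))
    · by_cases hij : i = j
      · subst hij; exact Or.inl ((pmul α β).iseqv.refl _)
      · obtain ⟨y, hne, hrel, huniq, hK1, hK2, -⟩ := walk_main hα hβ (Sum.inl i)
        rcases hy : y with i'' | j''
        · -- walk from i exits at a top point i'' ∈ dom α, i'' ≠ i, so i'' = j
          rcases hK1 i i'' rfl hy with hk | ⟨-, hd⟩
          · have : i'' = i := kerr_eq_of_dom hα hi hk
            rw [hy, this] at hne
            exact absurd rfl hne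
          · have hci : i'' ≠ i := by
              intro hcon; rw [hy, hcon] at hne; exact hne rfl
            have : i'' = j := mem_dom_third h2 hi hj hd hij hci
            rw [hy, this] at hrel
            exact Or.inl hrel
        · -- walk from i exits at the bottom, so i ∈ dom (αβ); now walk from j
          have hidom : i ∈ dom (pmul α β) := ⟨j'', by rw [hy] at hrel; exact hrel⟩
          obtain ⟨y', hne', hrel', huniq', hK1', hK2', -⟩ := walk_main hα hβ (Sum.inl j)
          rcases hy' : y' with i₃ | j₃
          · rcases hK1' j i₃ rfl hy' with hk | ⟨-, hd⟩
            · have : i₃ = j := kerr_eq_of_dom hα hj hk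
              rw [hy', this] at hne'
              exact absurd rfl hne'
            · have hci : i₃ ≠ j := by
                intro hcon; rw [hy', hcon] at hne'; exact hne' rfl
              have : i₃ = i := mem_dom_third h2 hj hi hd (Ne.symm hij) hci
              rw [hy', this] at hrel'
              exact Or.inl ((pmul α β).iseqv.symm hrel')
          · have hjdom : j ∈ dom (pmul α β) := ⟨j₃, by rw [hy'] at hrel'; exact hrel'⟩
            exact Or.inr ⟨hidom, hjdom⟩

lemma cokerr_eq_of_codom (hβ : IsBrauer β) {i j : Fin n} (hi : i ∈ codom β)
    (h : cokerr β i j) : j = i := by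
  obtain ⟨k, hk⟩ := (mem_codom_iff_bp hβ).1 hi
  rcases bp_spec hβ h with h' | h'
  · exact Sum.inr_injective h'
  · rw [hk] at h'; cases h'

lemma coker_codom_pmul (hα : IsBrauer α) (hβ : IsBrauer β) (h2 : (codom β).ncard ≤ 2)
    (i j : Fin n) :
    (cokerr (pmul α β) i j ∨ (i ∈ codom (pmul α β) ∧ j ∈ codom (pmul α β))) ↔
      (cokerr β i j ∨ (i ∈ codom β ∧ j ∈ codom β)) := by
  constructor
  · rintro (h | ⟨hi, hj⟩)
    · by_cases hij : i = j
      · subst hij; exact Or.inl (β.iseqv.refl _)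
      · obtain ⟨y, hne, hrel, huniq, hK1, hK2, hK3, hK4⟩ := walk_main hα hβ (Sum.inr i)
        rcases huniq _ h with h' | h'
        · exact absurd (Sum.inr_injective h') (Ne.symm hij)
        · exact hK3 i j rfl h'.symm
    · exact Or.inr ⟨codom_pmul_subset hα hβ hi, codom_pmul_subset hα hβ hj⟩
  · rintro (h | ⟨hi, hj⟩)
    · exact Or.inl (Relation.EqvGen.rel _ _ (mulBase_right h))
    · by_cases hij : i = j
      · subst hij; exact Or.inl ((pmul α β).iseqv.refl _)
      · obtain ⟨y, hne, hrel, huniq, hK1, hK2, hK3, hK4⟩ := walk_main hα hβ (Sum.inr i)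
        rcases hy : y with i'' | j''
        · -- exits at the top, so i ∈ codom (αβ); walk from j
          have hicod : i ∈ codom (pmul α β) :=
            ⟨i'', (pmul α β).iseqv.symm (by rw [hy] at hrel; exact hrel)⟩
          obtain ⟨y', hne', hrel', huniq', hK1', hK2', hK3', hK4'⟩ :=
            walk_main hα hβ (Sum.inr j)
          rcases hy' : y' with i₃ | j₃
          · have hjcod : j ∈ codom (pmul α β) :=
              ⟨i₃, (pmul α β).iseqv.symm (by rw [hy'] at hrel'; exact hrel')⟩
            exact Or.inr ⟨hicod, hjcod⟩
          · rcases hK3' j j₃ rfl hy' with hk | ⟨-, hd⟩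
            · have : j₃ = j := cokerr_eq_of_codom hβ hj hk
              rw [hy', this] at hne'
              exact absurd rfl hne'
            · have hci : j₃ ≠ j := by
                intro hcon; rw [hy', hcon] at hne'; exact hne' rfl
              have : j₃ = i := mem_dom_third h2 hj hi hd (Ne.symm hij) hci
              rw [hy', this] at hrel'
              exact Or.inl ((pmul α β).iseqv.symm hrel')
        · rcases hK3 i j'' rfl hy with hk | ⟨-, hd⟩
          · have : j'' = i := cokerr_eq_of_codom hβ hi hk
            rw [hy, this] at hne
            exact absurd rfl hne
          · have hci : j'' ≠ i := by
              intro hcon; rw [hy, hcon] at hne; exact hne rfl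
            have : j'' = j := mem_dom_third h2 hi hj hd hij hci
            rw [hy, this] at hrel
            exact Or.inl hrel
lemma pmul_nocross_top {A B : Ptn n} (hA : ∀ i j, ¬ A.r (Sum.inl i) (Sum.inr j))
    (hB : ∀ i j, ¬ B.r (Sum.inl i) (Sum.inr j)) (i j : Fin n) :
    (pmul A B).r (Sum.inl i) (Sum.inl j) ↔ A.r (Sum.inl i) (Sum.inl j) := by
  constructor
  · intro h
    have hcl : ∀ a ∈ {v : Fin n ⊕ Pt n | ∃ i', v = Sum.inl i' ∧ A.r (Sum.inl i) (Sum.inl i')},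
        ∀ b, mulBase A B a b →
          b ∈ {v : Fin n ⊕ Pt n | ∃ i', v = Sum.inl i' ∧ A.r (Sum.inl i) (Sum.inl i')} := by
      rintro a ⟨i', rfl, hrel⟩ b hab
      rcases hab with ⟨x, y, hxy, hx, hy⟩ | ⟨x, y, hxy, hx, hy⟩
      · have hxi : x = Sum.inl i' := iota1_eq_inl.1 hx
        subst hxi
        rcases y with i₃ | j₃
        · exact ⟨i₃, hy.symm, A.iseqv.trans hrel hxy⟩
        · exact absurd hxy (hA i' j₃)
      · exact absurd hx iota2_ne_inl
    have := (eqvGen_closed (mulBase_symm A B) hcl h).1 ⟨i, rfl, A.iseqv.refl _⟩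
    obtain ⟨i', heq, hrel⟩ := this
    have hij : i' = j := Sum.inl_injective heq.symm
    rwa [hij] at hrel
  · intro h
    exact Relation.EqvGen.rel _ _ (mulBase_left h)

lemma pmul_nocross_bot {A B : Ptn n} (hA : ∀ i j, ¬ A.r (Sum.inl i) (Sum.inr j))
    (hB : ∀ i j, ¬ B.r (Sum.inl i) (Sum.inr j)) (i j : Fin n) :
    (pmul A B).r (Sum.inr i) (Sum.inr j) ↔ B.r (Sum.inr i) (Sum.inr j) := by
  constructor
  · intro h
    have hcl : ∀ a ∈ {v : Fin n ⊕ Pt n | ∃ j', v = Sum.inr (Sum.inr j') ∧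
          B.r (Sum.inr i) (Sum.inr j')},
        ∀ b, mulBase A B a b →
          b ∈ {v : Fin n ⊕ Pt n | ∃ j', v = Sum.inr (Sum.inr j') ∧
            B.r (Sum.inr i) (Sum.inr j')} := by
      rintro a ⟨j', rfl, hrel⟩ b hab
      rcases hab with ⟨x, y, hxy, hx, hy⟩ | ⟨x, y, hxy, hx, hy⟩
      · exact absurd hx iota1_ne_bot
      · have hxj : x = Sum.inr j' := iota2_eq_bot.1 hx
        subst hxj
        rcases y with i₃ | j₃
        · exact absurd (B.iseqv.symm hxy) (hB i₃ j')
        · exact ⟨j₃, hy.symm, B.iseqv.trans hrel hxy⟩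
    have := (eqvGen_closed (mulBase_symm A B) hcl h).1 ⟨i, rfl, B.iseqv.refl _⟩
    obtain ⟨j', heq, hrel⟩ := this
    have hj : j' = j := Sum.inr_injective (Sum.inr_injective heq.symm)
    rwa [hj] at hrel
  · intro h
    exact Relation.EqvGen.rel _ _ (mulBase_right h)

lemma pmul_nocross_cross {A B : Ptn n} (hA : ∀ i j, ¬ A.r (Sum.inl i) (Sum.inr j))
    (hB : ∀ i j, ¬ B.r (Sum.inl i) (Sum.inr j)) (i j : Fin n) :
    ¬ (pmul A B).r (Sum.inl i) (Sum.inr j) := by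
  intro h
  have hcl : ∀ a ∈ {v : Fin n ⊕ Pt n | ∃ i', v = Sum.inl i' ∧ A.r (Sum.inl i) (Sum.inl i')},
      ∀ b, mulBase A B a b →
        b ∈ {v : Fin n ⊕ Pt n | ∃ i', v = Sum.inl i' ∧ A.r (Sum.inl i) (Sum.inl i')} := by
    rintro a ⟨i', rfl, hrel⟩ b hab
    rcases hab with ⟨x, y, hxy, hx, hy⟩ | ⟨x, y, hxy, hx, hy⟩
    · have hxi : x = Sum.inl i' := iota1_eq_inl.1 hx
      subst hxi
      rcases y with i₃ | j₃
      · exact ⟨i₃, hy.symm, A.iseqv.trans hrel hxy⟩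
      · exact absurd hxy (hA i' j₃)
    · exact absurd hx iota2_ne_inl
  have := (eqvGen_closed (mulBase_symm A B) hcl h).1 ⟨i, rfl, A.iseqv.refl _⟩
  obtain ⟨i', heq, -⟩ := this
  cases heq

lemma bhatBase_inl {γ : Ptn n} (i j : Fin n) :
    bhatBase γ (Sum.inl i) (Sum.inl j) ↔ kerr γ i j ∨ (i ∈ dom γ ∧ j ∈ dom γ) := by
  constructor
  · rintro (⟨h, -⟩ | ⟨h1, h2⟩ | ⟨h1, -⟩)
    · exact Or.inl h
    · exact Or.inr ⟨domPt_inl.1 h1, domPt_inl.1 h2⟩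
    · exact absurd h1 not_codPt_inl
  · rintro (h | ⟨h1, h2⟩)
    · exact Or.inl ⟨h, rfl⟩
    · exact Or.inr (Or.inl ⟨domPt_inl.2 h1, domPt_inl.2 h2⟩)

lemma bhatBase_inr {γ : Ptn n} (i j : Fin n) :
    bhatBase γ (Sum.inr i) (Sum.inr j) ↔ cokerr γ i j ∨ (i ∈ codom γ ∧ j ∈ codom γ) := by
  constructor
  · rintro (⟨h, -⟩ | ⟨h1, -⟩ | ⟨h1, h2⟩)
    · exact Or.inl h
    · exact absurd h1 not_domPt_inr
    · exact Or.inr ⟨codPt_inr.1 h1, codPt_inr.1 h2⟩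
  · rintro (h | ⟨h1, h2⟩)
    · exact Or.inl ⟨h, rfl⟩
    · exact Or.inr (Or.inr ⟨codPt_inr.2 h1, codPt_inr.2 h2⟩)

lemma bhatBase_not_cross {γ : Ptn n} (i j : Fin n) :
    ¬ bhatBase γ (Sum.inl i) (Sum.inr j) := by
  rintro (⟨-, h⟩ | ⟨-, h⟩ | ⟨h, -⟩)
  · simp at h
  · exact not_domPt_inr h
  · exact not_codPt_inl h

end PM

/-- In the Brauer monoid `B_n` with `n = 2m` even, the map `α ↦ α̂`
(replacing the two transversals of a rank-2 Brauer element by horizontal edges, and fixing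
rank-0 elements) is a retraction of the ideal `I₂ = {α ∈ B_n : rank α ≤ 2}` onto the
minimal ideal `I₀`: it maps `I₂` into `I₀` (within the Brauer monoid), fixes `I₀`
pointwise, and is a homomorphism on `I₂`. -/
theorem stmt15 (m : ℕ) :
    (∀ α : PM.Ptn (2 * m), PM.IsBrauer α → PM.rank α ≤ 2 →
      PM.IsBrauer (PM.bhat α) ∧ PM.rank (PM.bhat α) = 0) ∧
    (∀ α : PM.Ptn (2 * m), PM.IsBrauer α → PM.rank α = 0 → PM.bhat α = α) ∧
    (∀ α β : PM.Ptn (2 * m), PM.IsBrauer α → PM.IsBrauer β →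
      PM.rank α ≤ 2 → PM.rank β ≤ 2 →
      PM.bhat (PM.pmul α β) = PM.pmul (PM.bhat α) (PM.bhat β)) := by
  have heven : Even (2 * m) := ⟨m, by omega⟩
  refine ⟨?_, ?_, ?_⟩
  · intro α hα hrank
    rw [PM.rank_eq_ncard_dom hα] at hrank
    exact ⟨PM.bhat_brauer hα (PM.even_ncard_dom hα heven) hrank, PM.rank_bhat hα⟩
  · intro α hα h0
    exact PM.bhat_fix hα h0
  · intro α β hα hβ h2a h2b
    rw [PM.rank_eq_ncard_dom hα] at h2a
    rw [PM.rank_eq_ncard_dom hβ] at h2b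
    have h2b' : (PM.codom β).ncard ≤ 2 := by
      rw [PM.ncard_codom_eq_ncard_dom hβ]; exact h2b
    have hab : PM.IsBrauer (PM.pmul α β) := PM.pmul_brauer hα hβ
    apply Setoid.ext
    intro x y
    rw [PM.bhat_r hab]
    rcases x with i | i <;> rcases y with j | j
    · rw [PM.bhatBase_inl,
        PM.pmul_nocross_top (fun i j => PM.bhat_no_cross hα) (fun i j => PM.bhat_no_cross hβ),
        PM.bhat_r hα, PM.bhatBase_inl]
      exact PM.ker_dom_pmul hα hβ h2a i j
    · constructor
      · intro h
        exact absurd h (PM.bhatBase_not_cross i j)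
      · intro h
        exact absurd h (PM.pmul_nocross_cross (fun i j => PM.bhat_no_cross hα)
          (fun i j => PM.bhat_no_cross hβ) i j)
    · constructor
      · rintro (⟨-, h⟩ | ⟨h, -⟩ | ⟨-, h⟩)
        · simp at h
        · exact absurd h PM.not_domPt_inr
        · exact absurd h PM.not_codPt_inl
      · intro h
        exact absurd ((PM.pmul (PM.bhat α) (PM.bhat β)).iseqv.symm h)
          (PM.pmul_nocross_cross (fun i j => PM.bhat_no_cross hα)
            (fun i j => PM.bhat_no_cross hβ) j i)
    · rw [PM.bhatBase_inr,
        PM.pmul_nocross_bot (fun i j => PM.bhat_no_cross hα) (fun i j => PM.bhat_no_cross hβ),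
        PM.bhat_r hβ, PM.bhatBase_inr]
      exact PM.coker_codom_pmul hα hβ h2b' i j
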